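/- Let a_0, a_1, ..., a_k be a d_k-ordering of S ⊆ ℤ for integers d and k, and let p be a prime dividing d. Then for all 0 ≤ r ≤ k, the p-part of the fixed divisor d(S, F_r) equals the p-part of r!_S, where F_r(x) = (x - a_0)(x - a_1)···(x - a_{r-1}). -/

import Mathlib

open Polynomial Finset

/-- `p`-adic valuation on ℤ, valued in `ℕ∞` with `vp p 0 = ⊤`. -/
noncomputable def vp (p : ℕ) (x : ℤ) : ℕ∞ :=
  if x = 0 then ⊤ else (padicValInt p x : ℕ∞)

/-- `u` is a `p`-ordering of `S ⊆ ℤ`. -/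
def IsPOrdering (p : ℕ) (S : Set ℤ) (u : ℕ → ℤ) : Prop :=
  (∀ i, u i ∈ S) ∧
  ∀ m, 0 < m → ∀ a ∈ S,
    vp p (∏ i ∈ Finset.range m, (u m - u i)) ≤ vp p (∏ i ∈ Finset.range m, (a - u i))

/-- `e p m` is the exponent of `p` in the Bhargava factorial `m!_S`. -/
def IsFactExp (S : Set ℤ) (e : ℕ → ℕ → ℕ) : Prop :=
  ∀ p : ℕ, p.Prime → ∀ u : ℕ → ℤ, IsPOrdering p S u →
    ∀ m, (e p m : ℕ∞) = vp p (∏ i ∈ Finset.range m, (u m - u i))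

/-- `x 0, …, x k` is a `d_k`-ordering of `S`, where `e` records the exponents of the
Bhargava factorials of `S`. -/
def IsDkOrdering (S : Set ℤ) (d : ℤ) (k : ℕ) (e : ℕ → ℕ → ℕ) (x : ℕ → ℤ) : Prop :=
  ∀ p : ℕ, p.Prime → (p : ℤ) ∣ d →
    ∃ u : ℕ → ℤ, IsPOrdering p S u ∧ ∀ i ≤ k, (p : ℤ) ^ (e p k + 1) ∣ (x i - u i)

/-- `f ∈ Int(S,ℤ)`, i.e. `f` maps `S` into `ℤ`. -/
def IsIntValued (S : Set ℤ) (f : Polynomial ℚ) : Prop :=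
  ∀ a ∈ S, ∃ n : ℤ, f.eval (a : ℚ) = (n : ℚ)

/-- The ring `Int(S,ℤ)` of integer-valued polynomials on `S`, as a subring of `ℚ[X]`. -/
noncomputable def IntPoly (S : Set ℤ) : Subring (Polynomial ℚ) where
  carrier := {f | ∀ a ∈ S, ∃ n : ℤ, f.eval (a : ℚ) = (n : ℚ)}
  mul_mem' := by
    rintro f g hf hg
    intro a ha
    obtain ⟨n, hn⟩ := hf a ha
    obtain ⟨m, hm⟩ := hg a ha
    exact ⟨n * m, by simp [hn, hm]⟩
  one_mem' := fun a _ => ⟨1, by simp⟩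
  add_mem' := by
    rintro f g hf hg
    intro a ha
    obtain ⟨n, hn⟩ := hf a ha
    obtain ⟨m, hm⟩ := hg a ha
    exact ⟨n + m, by simp [hn, hm]⟩
  zero_mem' := fun a _ => ⟨0, by simp⟩
  neg_mem' := by
    rintro f hf a ha
    obtain ⟨n, hn⟩ := hf a ha
    exact ⟨-n, by simp [hn]⟩

/-- `f` is image primitive over `S`: no prime divides `f(a)` for all `a ∈ S`. -/
def IsImagePrimitive (S : Set ℤ) (f : Polynomial ℚ) : Prop :=
  ∀ p : ℕ, p.Prime → ∃ a ∈ S, ∀ n : ℤ, f.eval (a : ℚ) ≠ (p : ℚ) * (n : ℚ)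

/-- `m` is the fixed divisor `d(S,f)` of `f ∈ ℤ[X]` over `S` (gcd of values, up to sign). -/
def IsFixedDivisor (S : Set ℤ) (f : Polynomial ℤ) (m : ℤ) : Prop :=
  (∀ b ∈ S, m ∣ f.eval b) ∧ ∀ n : ℤ, (∀ b ∈ S, n ∣ f.eval b) → n ∣ m

/-!
Modulo `p ^ (e_k + 1)`, the product `∏_{i<r} (x - a_i)` agrees on all of `ℤ` with the product
`∏_{i<r} (x - u_i)` built from the `p`-ordering `u` that `a` approximates. For the latter, the
largest power of `p` dividing all its values on `S` is `p ^ e_r`: it divides them by the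
minimality defining a `p`-ordering, and at `x = u_r` no larger power does. Since the
exponents `e_r` increase with `r`, the congruence modulo `p ^ (e_r + 1)` transfers this exact
exponent to `∏_{i<r} (x - a_i)`.
-/

lemma pow_dvd_iff_le_vp {p : ℕ} (hp : p.Prime) (n : ℕ) (x : ℤ) :
    (p : ℤ) ^ n ∣ x ↔ (n : ℕ∞) ≤ vp p x := by
  have : Fact p.Prime := ⟨hp⟩
  unfold vp
  split_ifs with h
  · simp [h]
  · rw [Nat.cast_le, padicValInt_dvd_iff]
    simp [h]

lemma vp_le_vp_of_dvd {p : ℕ} (hp : p.Prime) {x y : ℤ} (h : x ∣ y) : vp p x ≤ vp p y :=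
  ENat.forall_natCast_le_iff_le.1 fun n hn =>
    (pow_dvd_iff_le_vp hp n y).1 (((pow_dvd_iff_le_vp hp n x).2 hn).trans h)

lemma forall_pow_dvd_iff_of_modEq {ι : Type*} {S : Set ι} {f g : ι → ℤ} {q : ℤ} {m : ℕ}
    (hfg : ∀ b ∈ S, f b ≡ g b [ZMOD q ^ (m + 1)])
    (hg : ∀ n : ℕ, (∀ b ∈ S, q ^ n ∣ g b) ↔ n ≤ m) (n : ℕ) :
    (∀ b ∈ S, q ^ n ∣ f b) ↔ n ≤ m := by
  constructor
  · intro hf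
    by_contra! hmn
    have hg_succ : ∀ b ∈ S, q ^ (m + 1) ∣ g b := fun b hb =>
      (hfg b hb).dvd_iff.1 ((pow_dvd_pow q hmn).trans (hf b hb))
    exact absurd ((hg (m + 1)).1 hg_succ) (by omega)
  · intro hnm b hb
    exact (((hfg b hb).of_dvd (pow_dvd_pow q (by omega))).dvd_iff).2 ((hg n).2 hnm b hb)

section POrdering

variable {S : Set ℤ} {e : ℕ → ℕ → ℕ} {p : ℕ} {u : ℕ → ℤ}

lemma IsPOrdering.vp_prod_le (hu : IsPOrdering p S u) (r : ℕ) {b : ℤ} (hb : b ∈ S) :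
    vp p (∏ i ∈ range r, (u r - u i)) ≤ vp p (∏ i ∈ range r, (b - u i)) := by
  rcases r.eq_zero_or_pos with rfl | hr
  · simp
  · exact hu.2 r hr b hb

lemma IsFactExp.monotone (he : IsFactExp S e) (hp : p.Prime) (hu : IsPOrdering p S u) :
    Monotone (e p) := by
  refine monotone_nat_of_le_succ fun m => ?_
  have hdvd : ∏ i ∈ range m, (u (m + 1) - u i) ∣ ∏ i ∈ range (m + 1), (u (m + 1) - u i) := by
    rw [prod_range_succ]
    exact dvd_mul_right _ _
  have h : (e p m : ℕ∞) ≤ e p (m + 1) :=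
    calc (e p m : ℕ∞) = vp p (∏ i ∈ range m, (u m - u i)) := he p hp u hu m
      _ ≤ vp p (∏ i ∈ range m, (u (m + 1) - u i)) := hu.vp_prod_le m (hu.1 _)
      _ ≤ vp p (∏ i ∈ range (m + 1), (u (m + 1) - u i)) := vp_le_vp_of_dvd hp hdvd
      _ = e p (m + 1) := (he p hp u hu _).symm
  exact_mod_cast h

lemma IsFactExp.forall_pow_dvd_prod_iff (he : IsFactExp S e) (hp : p.Prime)
    (hu : IsPOrdering p S u) (r n : ℕ) :
    (∀ b ∈ S, (p : ℤ) ^ n ∣ ∏ i ∈ range r, (b - u i)) ↔ n ≤ e p r := by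
  simp_rw [pow_dvd_iff_le_vp hp]
  rw [← Nat.cast_le (α := ℕ∞), he p hp u hu r]
  exact ⟨fun h => h _ (hu.1 r), fun h b hb => h.trans (hu.vp_prod_le r hb)⟩

end POrdering

/-- for a `d_k`-ordering `a` of `S` and a prime `p ∣ d`, the `p`-part of the
fixed divisor of `F_r = ∏_{i<r}(X - a_i)` over `S` equals the `p`-part of `r!_S`;
equivalently, `p^n` divides all values of `F_r` on `S` exactly when `n ≤ e p r`. -/
theorem stmt3 (S : Set ℤ) (d : ℤ) (k : ℕ)
    (e : ℕ → ℕ → ℕ) (he : IsFactExp S e)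
    (a : ℕ → ℤ) (ha : IsDkOrdering S d k e a)
    (p : ℕ) (hp : p.Prime) (hpd : (p : ℤ) ∣ d) :
    ∀ r ≤ k, ∀ n : ℕ,
      ((∀ b ∈ S, (p : ℤ) ^ n ∣ ∏ i ∈ Finset.range r, (b - a i)) ↔ n ≤ e p r) := by
  intro r hr n
  obtain ⟨u, hu, hau⟩ := ha p hp hpd
  have hexp : e p r + 1 ≤ e p k + 1 := Nat.succ_le_succ (he.monotone hp hu hr)
  refine forall_pow_dvd_iff_of_modEq (fun b _ => ?_) (he.forall_pow_dvd_prod_iff hp hu r) n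
  refine Int.ModEq.prod fun i hi => Int.ModEq.sub_left b ?_
  exact ((Int.modEq_of_dvd (hau i ((mem_range.1 hi).le.trans hr))).of_dvd (pow_dvd_pow _ hexp)).symm
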